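/- Let (A, ρ, t_d, t_u) and (A′, ρ′, t_d′, t_u′) be oriented quantum algebras over k, with ρ = Σᵢ aᵢ ⊗ bᵢ and ρ′ = Σ_{i′} a′_{i′} ⊗ b′_{i′}. Then (A ⊗ A′, ρ″, t_d ⊗ t_d′, t_u ⊗ t_u′) is an oriented quantum algebra over k, where ρ″ = Σᵢ Σ_{i′} (aᵢ ⊗ a′_{i′}) ⊗ (bᵢ ⊗ b′_{i′}) ∈ (A ⊗ A′) ⊗ (A ⊗ A′). -/

import Mathlib

open TensorProduct

noncomputable section

variable (k : Type*) [Field k] (A : Type*) [Ring A] [Algebra k A]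

/-- The linear map `A ⊗ A → A ⊗ Aᵐᵒᵖ` used to interpret elements in `A ⊗ Aᵒᵖ`. -/
def toOpTensor : A ⊗[k] A →ₗ[k] A ⊗[k] Aᵐᵒᵖ :=
  TensorProduct.map LinearMap.id (MulOpposite.opLinearEquiv k).toLinearMap

/-- `ρ ↦ ρ₁₂` in `A ⊗ (A ⊗ A)`. -/
def rho12 : A ⊗[k] A →ₐ[k] A ⊗[k] (A ⊗[k] A) :=
  Algebra.TensorProduct.map (AlgHom.id k A) Algebra.TensorProduct.includeLeft

/-- `ρ ↦ ρ₁₃`. -/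
def rho13 : A ⊗[k] A →ₐ[k] A ⊗[k] (A ⊗[k] A) :=
  Algebra.TensorProduct.map (AlgHom.id k A) Algebra.TensorProduct.includeRight

/-- `ρ ↦ ρ₂₃`. -/
def rho23 : A ⊗[k] A →ₐ[k] A ⊗[k] (A ⊗[k] A) :=
  Algebra.TensorProduct.includeRight

/-- The quantum Yang–Baxter equation. -/
def YangBaxter (ρ : A ⊗[k] A) : Prop :=
  rho12 k A ρ * rho13 k A ρ * rho23 k A ρ = rho23 k A ρ * rho13 k A ρ * rho12 k A ρ

/-- An oriented quantum algebra structure `(A, ρ, t_d, t_u)` (with `ρinv` the inverse of `ρ`). -/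
structure OrientedQA (ρ ρinv : A ⊗[k] A) (td tu : A →ₗ[k] A) : Prop where
  td_bij : Function.Bijective td
  tu_bij : Function.Bijective tu
  td_one : td 1 = 1
  td_mul : ∀ a b : A, td (a * b) = td a * td b
  tu_one : tu 1 = 1
  tu_mul : ∀ a b : A, tu (a * b) = tu a * tu b
  comm : ∀ a : A, td (tu a) = tu (td a)
  mul_inv : ρ * ρinv = 1
  inv_mul : ρinv * ρ = 1
  qa1_left : toOpTensor k A (TensorProduct.map LinearMap.id tu ρ) *
      toOpTensor k A (TensorProduct.map td LinearMap.id ρinv) = 1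
  qa1_right : toOpTensor k A (TensorProduct.map td LinearMap.id ρinv) *
      toOpTensor k A (TensorProduct.map LinearMap.id tu ρ) = 1
  qa2_d : TensorProduct.map td td ρ = ρ
  qa2_u : TensorProduct.map tu tu ρ = ρ
  qa3 : YangBaxter k A ρ

/-- Left contraction `(u* ⊗ 1)(ρ)`. -/
def contractL (f : Module.Dual k A) : A ⊗[k] A →ₗ[k] A :=
  (TensorProduct.lid k A).toLinearMap ∘ₗ TensorProduct.map f LinearMap.id

/-- Right contraction `(1 ⊗ v*)(ρ)`. -/
def contractR (g : Module.Dual k A) : A ⊗[k] A →ₗ[k] A :=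
  (TensorProduct.rid k A).toLinearMap ∘ₗ TensorProduct.map LinearMap.id g

/-- The set `A_(ρ)` of all `(u* ⊗ 1)(ρ) + (1 ⊗ v*)(ρ)`. -/
def contractSet (ρ : A ⊗[k] A) : Set A :=
  {x | ∃ f g : Module.Dual k A, x = contractL k A f ρ + contractR k A g ρ}

/-- A quantum algebra `(A, ρ, s)`, with `s` an algebra anti-automorphism. -/
structure QuantumAlgebra (ρ ρinv : A ⊗[k] A) (s : A ≃ₗ[k] A) : Prop where
  s_one : s 1 = 1
  s_anti : ∀ a b : A, s (a * b) = s b * s a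
  mul_inv : ρ * ρinv = 1
  inv_mul : ρinv * ρ = 1
  QA1 : ρinv = TensorProduct.map s.toLinearMap LinearMap.id ρ
  QA2 : TensorProduct.map s.toLinearMap s.toLinearMap ρ = ρ
  QA3 : YangBaxter k A ρ

end

/-! Every axiom of an oriented quantum algebra is an identity between products of images of `ρ`
and `ρ⁻¹` under maps built from the tensor structure. The middle swap
`(A ⊗ A) ⊗ (A' ⊗ A') ≃ (A ⊗ A') ⊗ (A ⊗ A')` is an algebra isomorphism intertwining each of these
maps with its componentwise version (`t ⊗ t'` on both legs, `ρ ↦ ρ₁₂, ρ₁₃, ρ₂₃`, and the passage to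
`A ⊗ Aᵐᵒᵖ` through `(A ⊗ A')ᵐᵒᵖ ≃ Aᵐᵒᵖ ⊗ A'ᵐᵒᵖ`), so each axiom for `ρ''` is the tensor product of
the corresponding axioms for `ρ` and `ρ'`. -/

section MapOfMultiplicative

variable {R : Type*} [CommSemiring R] {A B : Type*} [Semiring A] [Semiring B]
  [Algebra R A] [Algebra R B]

theorem TensorProduct.map_one_of_map_one {f : A →ₗ[R] A} {g : B →ₗ[R] B}
    (hf : f 1 = 1) (hg : g 1 = 1) : map f g 1 = 1 := by
  rw [Algebra.TensorProduct.one_def, map_tmul, hf, hg]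

theorem TensorProduct.map_mul_of_map_mul {f : A →ₗ[R] A} {g : B →ₗ[R] B}
    (hf : ∀ a b, f (a * b) = f a * f b) (hg : ∀ a b, g (a * b) = g a * g b)
    (x y : A ⊗[R] B) : map f g (x * y) = map f g x * map f g y := by
  revert x y
  rw [LinearMap.map_mul_iff]
  ext a b c d
  simp [hf, hg]

end MapOfMultiplicative

theorem Commute.tensorProduct_map {R M N : Type*} [CommSemiring R] [AddCommMonoid M]
    [AddCommMonoid N] [Module R M] [Module R N] {f g : Module.End R M} {f' g' : Module.End R N}
    (h : Commute f g) (h' : Commute f' g') : Commute (map f f') (map g g') := by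
  rw [Commute, SemiconjBy, ← TensorProduct.map_mul, ← TensorProduct.map_mul, h.eq, h'.eq]

section MiddleSwap

variable {R : Type*} [CommSemiring R] {A B C D : Type*} [Semiring A] [Semiring B]
  [Semiring C] [Semiring D] [Algebra R A] [Algebra R B] [Algebra R C] [Algebra R D]

theorem TensorProduct.tensorTensorTensorComm_mul (x y : (A ⊗[R] B) ⊗[R] (C ⊗[R] D)) :
    tensorTensorTensorComm R A B C D (x * y) =
      tensorTensorTensorComm R A B C D x * tensorTensorTensorComm R A B C D y :=
  map_mul (Algebra.TensorProduct.tensorTensorTensorComm R R R R A B C D) x y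

theorem TensorProduct.tensorTensorTensorComm_tmul_mul_eq_one {x y : A ⊗[R] B} {x' y' : C ⊗[R] D}
    (h : x * y = 1) (h' : x' * y' = 1) :
    tensorTensorTensorComm R A B C D (x ⊗ₜ x') *
      tensorTensorTensorComm R A B C D (y ⊗ₜ y') = 1 := by
  rw [← tensorTensorTensorComm_mul, Algebra.TensorProduct.tmul_mul_tmul, h, h',
    ← Algebra.TensorProduct.one_def]
  exact map_one (Algebra.TensorProduct.tensorTensorTensorComm R R R R A B C D)

end MiddleSwap

theorem TensorProduct.map_map_tensorTensorTensorComm_tmul {R M N P Q M' N' P' Q' : Type*}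
    [CommSemiring R] [AddCommMonoid M] [AddCommMonoid N] [AddCommMonoid P] [AddCommMonoid Q]
    [AddCommMonoid M'] [AddCommMonoid N'] [AddCommMonoid P'] [AddCommMonoid Q']
    [Module R M] [Module R N] [Module R P] [Module R Q]
    [Module R M'] [Module R N'] [Module R P'] [Module R Q']
    (f : M →ₗ[R] M') (g : N →ₗ[R] N') (f' : P →ₗ[R] P') (g' : Q →ₗ[R] Q')
    (x : M ⊗[R] N) (x' : P ⊗[R] Q) :
    map (map f f') (map g g') (tensorTensorTensorComm R M N P Q (x ⊗ₜ x')) =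
      tensorTensorTensorComm R M' N' P' Q' (map f g x ⊗ₜ map f' g' x') :=
  (LinearMap.congr_fun (tensorTensorTensorComm_comp_map (R := R) f g f' g') (x ⊗ₜ x')).symm

section OrientedTensor

variable {k : Type*} [Field k] {A A' : Type*} [Ring A] [Algebra k A] [Ring A'] [Algebra k A']

variable (k A A') in
def opTensorComm :
    (A ⊗[k] Aᵐᵒᵖ) ⊗[k] (A' ⊗[k] A'ᵐᵒᵖ) ≃ₐ[k] (A ⊗[k] A') ⊗[k] (A ⊗[k] A')ᵐᵒᵖ :=
  (Algebra.TensorProduct.tensorTensorTensorComm k k k k A Aᵐᵒᵖ A' A'ᵐᵒᵖ).trans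
    (Algebra.TensorProduct.congr AlgEquiv.refl (Algebra.TensorProduct.opAlgEquiv k k A A'))

theorem toOpTensor_tensorTensorTensorComm_tmul (x : A ⊗[k] A) (x' : A' ⊗[k] A') :
    toOpTensor k (A ⊗[k] A') (tensorTensorTensorComm k A A A' A' (x ⊗ₜ x')) =
      opTensorComm k A A' (toOpTensor k A x ⊗ₜ toOpTensor k A' x') := by
  refine LinearMap.congr_fun (ext_fourfold'
    (φ := toOpTensor k (A ⊗[k] A') ∘ₗ (tensorTensorTensorComm k A A A' A').toLinearMap)
    (ψ := (opTensorComm k A A').toLinearMap ∘ₗ map (toOpTensor k A) (toOpTensor k A'))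
    fun a b a' b' => ?_) (x ⊗ₜ x')
  simp [toOpTensor, opTensorComm]

theorem toOpTensor_tensorTensorTensorComm_mul_eq_one {x y : A ⊗[k] A} {x' y' : A' ⊗[k] A'}
    (h : toOpTensor k A x * toOpTensor k A y = 1)
    (h' : toOpTensor k A' x' * toOpTensor k A' y' = 1) :
    toOpTensor k (A ⊗[k] A') (tensorTensorTensorComm k A A A' A' (x ⊗ₜ x')) *
      toOpTensor k (A ⊗[k] A') (tensorTensorTensorComm k A A A' A' (y ⊗ₜ y')) = 1 := by
  rw [toOpTensor_tensorTensorTensorComm_tmul, toOpTensor_tensorTensorTensorComm_tmul,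
    ← map_mul, Algebra.TensorProduct.tmul_mul_tmul, h, h', ← Algebra.TensorProduct.one_def, map_one]

variable (k A A') in
def tensorTensorTensorComm₃ :
    (A ⊗[k] (A ⊗[k] A)) ⊗[k] (A' ⊗[k] (A' ⊗[k] A')) ≃ₐ[k]
      (A ⊗[k] A') ⊗[k] ((A ⊗[k] A') ⊗[k] (A ⊗[k] A')) :=
  (Algebra.TensorProduct.tensorTensorTensorComm k k k k A (A ⊗[k] A) A' (A' ⊗[k] A')).trans
    (Algebra.TensorProduct.congr AlgEquiv.refl
      (Algebra.TensorProduct.tensorTensorTensorComm k k k k A A A' A'))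

theorem rho12_tensorTensorTensorComm_tmul (x : A ⊗[k] A) (x' : A' ⊗[k] A') :
    rho12 k (A ⊗[k] A') (tensorTensorTensorComm k A A A' A' (x ⊗ₜ x')) =
      tensorTensorTensorComm₃ k A A' (rho12 k A x ⊗ₜ rho12 k A' x') := by
  have : (rho12 k (A ⊗[k] A')).comp
      (Algebra.TensorProduct.tensorTensorTensorComm k k k k A A A' A').toAlgHom =
      (tensorTensorTensorComm₃ k A A').toAlgHom.comp
        (Algebra.TensorProduct.map (rho12 k A) (rho12 k A')) := by
    ext <;> simp [rho12, tensorTensorTensorComm₃, Algebra.TensorProduct.one_def]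
  exact AlgHom.congr_fun this (x ⊗ₜ x')

theorem rho13_tensorTensorTensorComm_tmul (x : A ⊗[k] A) (x' : A' ⊗[k] A') :
    rho13 k (A ⊗[k] A') (tensorTensorTensorComm k A A A' A' (x ⊗ₜ x')) =
      tensorTensorTensorComm₃ k A A' (rho13 k A x ⊗ₜ rho13 k A' x') := by
  have : (rho13 k (A ⊗[k] A')).comp
      (Algebra.TensorProduct.tensorTensorTensorComm k k k k A A A' A').toAlgHom =
      (tensorTensorTensorComm₃ k A A').toAlgHom.comp
        (Algebra.TensorProduct.map (rho13 k A) (rho13 k A')) := by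
    ext <;> simp [rho13, tensorTensorTensorComm₃, Algebra.TensorProduct.one_def]
  exact AlgHom.congr_fun this (x ⊗ₜ x')

theorem rho23_tensorTensorTensorComm_tmul (x : A ⊗[k] A) (x' : A' ⊗[k] A') :
    rho23 k (A ⊗[k] A') (tensorTensorTensorComm k A A A' A' (x ⊗ₜ x')) =
      tensorTensorTensorComm₃ k A A' (rho23 k A x ⊗ₜ rho23 k A' x') := by
  have : (rho23 k (A ⊗[k] A')).comp
      (Algebra.TensorProduct.tensorTensorTensorComm k k k k A A A' A').toAlgHom =
      (tensorTensorTensorComm₃ k A A').toAlgHom.comp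
        (Algebra.TensorProduct.map (rho23 k A) (rho23 k A')) := by
    ext <;> simp [rho23, tensorTensorTensorComm₃, Algebra.TensorProduct.one_def]
  exact AlgHom.congr_fun this (x ⊗ₜ x')

theorem YangBaxter.tensorTensorTensorComm {ρ : A ⊗[k] A} {ρ' : A' ⊗[k] A'}
    (h : YangBaxter k A ρ) (h' : YangBaxter k A' ρ') :
    YangBaxter k (A ⊗[k] A') (tensorTensorTensorComm k A A A' A' (ρ ⊗ₜ ρ')) := by
  unfold YangBaxter at h h' ⊢
  rw [rho12_tensorTensorTensorComm_tmul, rho13_tensorTensorTensorComm_tmul,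
    rho23_tensorTensorTensorComm_tmul, ← map_mul, ← map_mul, ← map_mul, ← map_mul,
    Algebra.TensorProduct.tmul_mul_tmul, Algebra.TensorProduct.tmul_mul_tmul,
    Algebra.TensorProduct.tmul_mul_tmul, Algebra.TensorProduct.tmul_mul_tmul, h, h']

end OrientedTensor

open TensorProduct in
/-- the tensor product of two oriented quantum algebras is an oriented
quantum algebra, with `ρ''` the middle-swap of `ρ ⊗ ρ'`. -/
theorem tensor_oriented_quantum_algebra {k : Type*} [Field k]
    {A : Type*} [Ring A] [Algebra k A] {A' : Type*} [Ring A'] [Algebra k A']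
    (ρ ρinv : A ⊗[k] A) (td tu : A →ₗ[k] A)
    (ρ' ρinv' : A' ⊗[k] A') (td' tu' : A' →ₗ[k] A')
    (h : OrientedQA k A ρ ρinv td tu) (h' : OrientedQA k A' ρ' ρinv' td' tu') :
    OrientedQA k (A ⊗[k] A')
      (TensorProduct.tensorTensorTensorComm k A A A' A' (ρ ⊗ₜ[k] ρ'))
      (TensorProduct.tensorTensorTensorComm k A A A' A' (ρinv ⊗ₜ[k] ρinv'))
      (TensorProduct.map td td') (TensorProduct.map tu tu') where
  td_bij := map_bijective h.td_bij h'.td_bij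
  tu_bij := map_bijective h.tu_bij h'.tu_bij
  td_one := map_one_of_map_one h.td_one h'.td_one
  td_mul := map_mul_of_map_mul h.td_mul h'.td_mul
  tu_one := map_one_of_map_one h.tu_one h'.tu_one
  tu_mul := map_mul_of_map_mul h.tu_mul h'.tu_mul
  comm := LinearMap.congr_fun
    (Commute.tensorProduct_map (LinearMap.ext h.comm) (LinearMap.ext h'.comm)).eq
  mul_inv := tensorTensorTensorComm_tmul_mul_eq_one h.mul_inv h'.mul_inv
  inv_mul := tensorTensorTensorComm_tmul_mul_eq_one h.inv_mul h'.inv_mul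
  qa1_left := by
    rw [← map_id, map_map_tensorTensorTensorComm_tmul, map_map_tensorTensorTensorComm_tmul]
    exact toOpTensor_tensorTensorTensorComm_mul_eq_one h.qa1_left h'.qa1_left
  qa1_right := by
    rw [← map_id, map_map_tensorTensorTensorComm_tmul, map_map_tensorTensorTensorComm_tmul]
    exact toOpTensor_tensorTensorTensorComm_mul_eq_one h.qa1_right h'.qa1_right
  qa2_d := by rw [map_map_tensorTensorTensorComm_tmul, h.qa2_d, h'.qa2_d]
  qa2_u := by rw [map_map_tensorTensorTensorComm_tmul, h.qa2_u, h'.qa2_u]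
  qa3 := h.qa3.tensorTensorTensorComm h'.qa3
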